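/- The map f ↦ B_f from a Boolean algebra B to the lattice of subsets of Spec(B) is an injective Boolean algebra homomorphism; equivalently, the evaluation map B → 2^{Spec(B)} sending f to (p ↦ (f ∉ p)) is an injective Boolean algebra homomorphism (Stone representation). -/

import Mathlib

/-- An (order) ideal of a Boolean algebra: nonempty, downward closed, closed under finite joins. -/
def IsIdealBA {B : Type*} [BooleanAlgebra B] (p : Set B) : Prop :=
  p.Nonempty ∧ (∀ x ∈ p, ∀ y, y ≤ x → y ∈ p) ∧ (∀ x ∈ p, ∀ y ∈ p, x ⊔ y ∈ p)

/-- A prime ideal: a proper ideal such that `x ⊓ y ∈ p` implies `x ∈ p` or `y ∈ p`. -/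
def IsPrimeIdealBA {B : Type*} [BooleanAlgebra B] (p : Set B) : Prop :=
  IsIdealBA p ∧ p ≠ Set.univ ∧ ∀ x y : B, x ⊓ y ∈ p → x ∈ p ∨ y ∈ p

/-- A filter of a Boolean algebra: nonempty, upward closed, closed under finite meets. -/
def IsFilterBA {B : Type*} [BooleanAlgebra B] (F : Set B) : Prop :=
  F.Nonempty ∧ (∀ x ∈ F, ∀ y, x ≤ y → y ∈ F) ∧ (∀ x ∈ F, ∀ y ∈ F, x ⊓ y ∈ F)

/-- An ultrafilter: a proper filter containing `x` or `xᶜ` for every `x`. -/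
def IsUltrafilterBA {B : Type*} [BooleanAlgebra B] (F : Set B) : Prop :=
  IsFilterBA F ∧ F ≠ Set.univ ∧ ∀ x : B, x ∈ F ∨ xᶜ ∈ F

/-- The Stone spectrum: the set of prime ideals of `B`. -/
def SpecBA (B : Type*) [BooleanAlgebra B] : Type _ := {p : Set B // IsPrimeIdealBA p}

/-- The basic set `B_f = { p ∈ Spec B : f ∉ p }`. -/
def basicSet {B : Type*} [BooleanAlgebra B] (f : B) : Set (SpecBA B) := {p | f ∉ p.1}

/-- The Stone topology on `Spec B`, generated by the basic sets. -/
instance specTopology (B : Type*) [BooleanAlgebra B] : TopologicalSpace (SpecBA B) :=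
  TopologicalSpace.generateFrom (Set.range (basicSet (B := B)))

/-!
Every prime ideal `p` is determined on `f ⊓ g`, `f ⊔ g` and `fᶜ` by its behaviour on `f` and `g`
(primality handles meets, the ideal axioms joins, and `f ⊓ fᶜ = ⊥`, `f ⊔ fᶜ = ⊤` complements), so
`f ↦ B_f` preserves the Boolean operations. It reflects the order because whenever `f ≰ g` the
prime ideal theorem separates the principal filter of `f` from the principal ideal of `g`.
-/

section ideal

variable {B : Type*} [BooleanAlgebra B] {p : Set B} {x y : B}

namespace IsIdealBA

lemma mem_of_le (hp : IsIdealBA p) (hyx : y ≤ x) (hx : x ∈ p) : y ∈ p :=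
  hp.2.1 x hx y hyx

lemma bot_mem (hp : IsIdealBA p) : ⊥ ∈ p :=
  let ⟨_, hx⟩ := hp.1
  hp.mem_of_le bot_le hx

lemma sup_mem_iff (hp : IsIdealBA p) : x ⊔ y ∈ p ↔ x ∈ p ∧ y ∈ p :=
  ⟨fun h ↦ ⟨hp.mem_of_le le_sup_left h, hp.mem_of_le le_sup_right h⟩,
    fun h ↦ hp.2.2 x h.1 y h.2⟩

lemma top_notMem (hp : IsIdealBA p) (hne : p ≠ Set.univ) : ⊤ ∉ p := fun h ↦
  hne (Set.eq_univ_of_forall fun _ ↦ hp.mem_of_le le_top h)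

end IsIdealBA

namespace IsPrimeIdealBA

lemma top_notMem (hp : IsPrimeIdealBA p) : ⊤ ∉ p :=
  hp.1.top_notMem hp.2.1

lemma inf_mem_iff (hp : IsPrimeIdealBA p) : x ⊓ y ∈ p ↔ x ∈ p ∨ y ∈ p :=
  ⟨hp.2.2 x y, fun h ↦ h.elim (hp.1.mem_of_le inf_le_left) (hp.1.mem_of_le inf_le_right)⟩

lemma compl_mem_iff (hp : IsPrimeIdealBA p) : xᶜ ∈ p ↔ x ∉ p := by
  constructor
  · intro hxc hx
    exact hp.top_notMem (sup_compl_eq_top (x := x) ▸ hp.1.sup_mem_iff.2 ⟨hx, hxc⟩)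
  · intro hx
    have hbot : x ⊓ xᶜ ∈ p := inf_compl_self x ▸ hp.1.bot_mem
    exact (hp.inf_mem_iff.1 hbot).resolve_left hx

end IsPrimeIdealBA

end ideal

lemma Order.Ideal.IsPrime.isPrimeIdealBA {B : Type*} [BooleanAlgebra B] {J : Order.Ideal B}
    (hJ : J.IsPrime) : IsPrimeIdealBA (J : Set B) :=
  ⟨⟨J.nonempty, fun _ hx _ hyx ↦ J.lower hyx hx, fun _ hx _ hy ↦ J.sup_mem hx hy⟩,
    hJ.toIsProper.ne_univ, fun _ _ ↦ hJ.mem_or_mem⟩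

lemma exists_isPrimeIdealBA_mem_notMem {B : Type*} [BooleanAlgebra B] {f g : B} (h : ¬f ≤ g) :
    ∃ p : Set B, IsPrimeIdealBA p ∧ g ∈ p ∧ f ∉ p := by
  have hdisj : Disjoint (Order.PFilter.principal f : Set B) (Order.Ideal.principal g : Set B) :=
    Set.disjoint_left.2 fun _ hfx hxg ↦ h (le_trans hfx hxg)
  obtain ⟨J, hJ, hgJ, hfJ⟩ := DistribLattice.prime_ideal_of_disjoint_filter_ideal hdisj
  exact ⟨J, hJ.isPrimeIdealBA, hgJ (Order.Ideal.mem_principal.2 le_rfl),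
    Set.disjoint_left.1 hfJ (Order.PFilter.mem_principal.2 le_rfl)⟩

section basicSet

variable {B : Type*} [BooleanAlgebra B]

lemma basicSet_inf (f g : B) : basicSet (f ⊓ g) = basicSet f ∩ basicSet g := by
  ext p
  simp [basicSet, p.2.inf_mem_iff]

lemma basicSet_sup (f g : B) : basicSet (f ⊔ g) = basicSet f ∪ basicSet g := by
  ext p
  simp [basicSet, p.2.1.sup_mem_iff, or_iff_not_and_not]

lemma basicSet_compl (f : B) : basicSet fᶜ = (basicSet f)ᶜ := by
  ext p
  simp [basicSet, p.2.compl_mem_iff]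

lemma basicSet_bot : basicSet (⊥ : B) = ∅ :=
  Set.eq_empty_of_forall_notMem fun p hp ↦ hp p.2.1.bot_mem

lemma basicSet_top : basicSet (⊤ : B) = Set.univ :=
  Set.eq_univ_of_forall fun p ↦ p.2.top_notMem

lemma basicSet_subset_basicSet_iff {f g : B} : basicSet f ⊆ basicSet g ↔ f ≤ g := by
  refine ⟨fun hfg ↦ by_contra fun h ↦ ?_, fun hfg p hf hg ↦ hf (p.2.1.mem_of_le hfg hg)⟩
  obtain ⟨p, hp, hg, hf⟩ := exists_isPrimeIdealBA_mem_notMem h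
  exact hfg (a := ⟨p, hp⟩) hf hg

lemma basicSet_injective : Function.Injective (basicSet (B := B)) := fun _ _ h ↦
  le_antisymm (basicSet_subset_basicSet_iff.1 h.le) (basicSet_subset_basicSet_iff.1 h.ge)

end basicSet

/-- Stone representation: `f ↦ B_f` is an injective Boolean algebra homomorphism
from `B` into the powerset Boolean algebra of `Spec B`. -/
theorem stmt_4 {B : Type*} [BooleanAlgebra B] :
    Function.Injective (basicSet (B := B)) ∧
    (∀ f g : B, basicSet (f ⊓ g) = basicSet f ∩ basicSet g) ∧
    (∀ f g : B, basicSet (f ⊔ g) = basicSet f ∪ basicSet g) ∧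
    (∀ f : B, basicSet fᶜ = (basicSet f)ᶜ) ∧
    basicSet (⊥ : B) = (∅ : Set (SpecBA B)) ∧
    basicSet (⊤ : B) = (Set.univ : Set (SpecBA B)) :=
  ⟨basicSet_injective, basicSet_inf, basicSet_sup, basicSet_compl, basicSet_bot, basicSet_top⟩
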